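/- arXiv:2210.05379 — 5 statements merged into one kernel-verified Lean document; each statement's English description precedes it below -/
import Mathlib

section
/- Every local minimizer x̄ of problem (P) (i.e., x̄ is feasible and there is a neighborhood of x̄ on which f(x̄) ≤ f(x) for all feasible x) is an AM-stationary point of (P). -/
/-!
Penalize the constraints and add a proximal term: let `x k` minimize
`f + (c k / 2) d_C(G ·)² + (a k / 2) d_D(·)² + ‖· - xb‖²` on a closed ball around `xb` on which `xb`
is optimal. A cluster point `z` is feasible and satisfies `f z + ‖z - xb‖² ≤ f xb ≤ f z`, so
`x k → xb`. At `x k` the penalty touches from below the smooth function obtained by replacing the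
distances with distances to the projections `y k` of `G (x k)` onto `C` and `p k` of `x k` onto `D`;
Fermat's rule for it is an exact stationarity equation at `x k`. Read at the feasible point
`p k`, `a k • (x k - p k)` is a proximal, hence limiting, normal to `D`, and
`λ k = c k • (G (x k) - y k)` is normal to `C` at `y k`. The error `(G'(p k) - G'(x k))* λ k` is at
most `d_C(G (x k)) → 0` once `a k` is so large that `‖x k - p k‖` lies below the modulus of uniform
continuity of `G'` for the tolerance `1 / c k`.
-/

open Filter Topology RealInnerProductSpace

noncomputable section

/-- The (set-valued) Euclidean projection of `x` onto `D`:
`Π_D(x) = argmin_{z ∈ D} ‖z - x‖`. -/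
def projSet {E : Type*} [NormedAddCommGroup E] (D : Set E) (x : E) : Set E :=
  {z | z ∈ D ∧ ∀ w ∈ D, ‖z - x‖ ≤ ‖w - x‖}

/-- The limiting (Mordukhovich) normal cone to `D` at `x`:
`N_D^lim(x) = limsup_{v → x} cone(v - Π_D(v))`, empty outside `D`. -/
def limNormalCone {E : Type*} [NormedAddCommGroup E] [NormedSpace ℝ E]
    (D : Set E) (x : E) : Set E :=
  {w | x ∈ D ∧ ∃ v ws : ℕ → E,
    Tendsto v atTop (𝓝 x) ∧ Tendsto ws atTop (𝓝 w) ∧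
    ∀ j, ∃ t : ℝ, ∃ p, 0 ≤ t ∧ p ∈ projSet D (v j) ∧ ws j = t • (v j - p)}

/-- The normal cone (of convex analysis) to the convex set `C` at `y`, empty outside `C`. -/
def convNormalCone {E : Type*} [NormedAddCommGroup E] [InnerProductSpace ℝ E]
    (C : Set E) (y : E) : Set E :=
  {l | y ∈ C ∧ ∀ c ∈ C, ⟪l, c - y⟫ ≤ 0}

variable {X Y : Type*} [NormedAddCommGroup X] [InnerProductSpace ℝ X] [FiniteDimensional ℝ X]
  [NormedAddCommGroup Y] [InnerProductSpace ℝ Y] [FiniteDimensional ℝ Y]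

/-- `xb` is an AM-stationary (asymptotically M-stationary) point of problem (P):
minimize `f x` s.t. `G x ∈ C`, `x ∈ D`. -/
def AMStationary (f : X → ℝ) (G : X → Y) (C : Set Y) (D : Set X) (xb : X) : Prop :=
  G xb ∈ C ∧ xb ∈ D ∧
    ∃ (xs εs : ℕ → X) (zs lam : ℕ → Y),
      Tendsto xs atTop (𝓝 xb) ∧ Tendsto εs atTop (𝓝 0) ∧ Tendsto zs atTop (𝓝 0) ∧
      ∀ k, lam k ∈ convNormalCone C (G (xs k) - zs k) ∧
        ∃ w ∈ limNormalCone D (xs k),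
          εs k = gradient f (xs k) +
            ContinuousLinearMap.adjoint (fderiv ℝ G (xs k)) (lam k) + w

open Metric
open ContinuousLinearMap (adjoint)

section Projection

variable {E : Type*} [NormedAddCommGroup E]

theorem infDist_eq_norm_sub_of_mem_projSet {D : Set E} {x p : E} (hp : p ∈ projSet D x) :
    infDist x D = ‖x - p‖ := by
  refine le_antisymm (dist_eq_norm x p ▸ infDist_le_dist_of_mem hp.1) ?_
  refine (le_infDist ⟨p, hp.1⟩).2 fun q hq => ?_
  simpa only [norm_sub_rev x, dist_comm x, dist_eq_norm] using hp.2 q hq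

theorem exists_mem_projSet [ProperSpace E] {D : Set E} (hD : IsClosed D) (hne : D.Nonempty)
    (x : E) : ∃ p, p ∈ projSet D x := by
  obtain ⟨p, hpD, hp⟩ := hD.exists_infDist_eq_dist hne x
  refine ⟨p, hpD, fun q hq => ?_⟩
  simpa only [norm_sub_rev _ x, ← dist_eq_norm, ← hp] using infDist_le_dist_of_mem hq

theorem mem_projSet_add_smul_sub [NormedSpace ℝ E] {D : Set E} {x p : E} (hp : p ∈ projSet D x)
    {s : ℝ} (hs0 : 0 ≤ s) (hs1 : s ≤ 1) : p ∈ projSet D (p + s • (x - p)) := by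
  refine ⟨hp.1, fun q hq => ?_⟩
  set v := p + s • (x - p)
  have hpv : ‖p - v‖ = s * ‖x - p‖ := by
    rw [show p - v = (-s) • (x - p) by module, norm_smul, norm_neg, Real.norm_of_nonneg hs0]
  have hxv : ‖x - v‖ = (1 - s) * ‖x - p‖ := by
    rw [show x - v = (1 - s) • (x - p) by module, norm_smul,
      Real.norm_of_nonneg (sub_nonneg.2 hs1)]
  calc ‖p - v‖ = ‖p - x‖ - ‖x - v‖ := by rw [hpv, hxv, norm_sub_rev]; ring
    _ ≤ ‖q - x‖ - ‖x - v‖ := by linarith [hp.2 q hq]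
    _ ≤ ‖q - v‖ := by linarith [norm_sub_le_norm_sub_add_norm_sub q v x, norm_sub_rev v x]

theorem smul_sub_mem_limNormalCone [NormedSpace ℝ E] {D : Set E} {x p : E}
    (hp : p ∈ projSet D x) {a : ℝ} (ha : 0 ≤ a) : a • (x - p) ∈ limNormalCone D p := by
  refine ⟨hp.1, fun j => p + (1 / (j + 1 : ℝ)) • (x - p), fun _ => a • (x - p), ?_,
    tendsto_const_nhds, fun j => ⟨a * (j + 1), p, by positivity, ?_, ?_⟩⟩
  · have h : Tendsto (fun j : ℕ => 1 / (j + 1 : ℝ)) atTop (𝓝 0) :=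
      tendsto_one_div_add_atTop_nhds_zero_nat
    simpa using (h.smul_const (x - p)).const_add p
  · exact mem_projSet_add_smul_sub hp (by positivity)
      ((div_le_one (by positivity)).2 (by linarith [j.cast_nonneg (α := ℝ)]))
  · rw [add_sub_cancel_left, smul_smul]
    field_simp

end Projection

theorem smul_sub_mem_convNormalCone {E : Type*} [NormedAddCommGroup E] [InnerProductSpace ℝ E]
    {C : Set E} (hC : Convex ℝ C) {u p : E} (hp : p ∈ projSet C u) {c : ℝ} (hc : 0 ≤ c) :
    c • (u - p) ∈ convNormalCone C p := by
  have hinf : ‖u - p‖ = ⨅ w : C, ‖u - w‖ := by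
    simp_rw [← infDist_eq_norm_sub_of_mem_projSet hp, infDist_eq_iInf, dist_eq_norm]
  refine ⟨hp.1, fun w hw => ?_⟩
  rw [real_inner_smul_left]
  exact mul_nonpos_of_nonneg_of_nonpos hc
    ((norm_eq_iInf_iff_real_inner_le_zero hC hp.1).1 hinf w hw)

section Gradient

variable {F : Type*} [NormedAddCommGroup F] [InnerProductSpace ℝ F] [CompleteSpace F]
  {f g : F → ℝ} {f' g' x : F}

theorem ContDiff.continuous_gradient (hf : ContDiff ℝ 1 f) : Continuous (gradient f) :=
  (InnerProductSpace.toDual ℝ F).symm.continuous.comp (hf.continuous_fderiv one_ne_zero)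

theorem HasGradientAt.add (hf : HasGradientAt f f' x) (hg : HasGradientAt g g' x) :
    HasGradientAt (fun v => f v + g v) (f' + g') x := by
  rw [hasGradientAt_iff_hasFDerivAt, map_add]
  exact hf.hasFDerivAt.add hg.hasFDerivAt

theorem HasGradientAt.const_mul (c : ℝ) (hf : HasGradientAt f f' x) :
    HasGradientAt (fun v => c * f v) (c • f') x := by
  rw [hasGradientAt_iff_hasFDerivAt, map_smul]
  exact hf.hasFDerivAt.const_mul c

theorem IsLocalMin.hasGradientAt_eq_zero (h : IsLocalMin f x) (hf : HasGradientAt f f' x) :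
    f' = 0 :=
  (InnerProductSpace.toDual ℝ F).map_eq_zero_iff.1 (h.hasFDerivAt_eq_zero hf.hasFDerivAt)

theorem HasFDerivAt.hasGradientAt_norm_sq {E : Type*} [NormedAddCommGroup E]
    [InnerProductSpace ℝ E] [CompleteSpace E] {G : F → E} {A : F →L[ℝ] E}
    (hG : HasFDerivAt G A x) :
    HasGradientAt (fun v => ‖G v‖ ^ 2) ((2 : ℝ) • adjoint A (G x)) x := by
  have h : InnerProductSpace.toDual ℝ F ((2 : ℝ) • adjoint A (G x)) =
      2 • (innerSL ℝ (G x)).comp A := by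
    ext u
    simp [two_smul, ContinuousLinearMap.adjoint_inner_left]
  rw [hasGradientAt_iff_hasFDerivAt, h]
  exact hG.norm_sq

theorem hasGradientAt_norm_sub_sq (p : F) :
    HasGradientAt (fun v => ‖v - p‖ ^ 2) ((2 : ℝ) • (x - p)) x := by
  simpa [ContinuousLinearMap.adjoint_id] using
    ((hasFDerivAt_id x).sub_const p).hasGradientAt_norm_sq

end Gradient

section Penalty

variable {E F : Type*} [NormedAddCommGroup E] [NormedAddCommGroup F]
  (f : E → ℝ) (G : E → F) (C : Set F) (D : Set E) (xb : E)

def penalty (c a : ℝ) (x : E) : ℝ :=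
  f x + c / 2 * infDist (G x) C ^ 2 + a / 2 * infDist x D ^ 2 + ‖x - xb‖ ^ 2

variable {f G C D xb}

theorem continuous_penalty (hf : Continuous f) (hG : Continuous G) (c a : ℝ) :
    Continuous (penalty f G C D xb c a) := by
  unfold penalty
  fun_prop

theorem penalty_self (hGxb : G xb ∈ C) (hxbD : xb ∈ D) (c a : ℝ) :
    penalty f G C D xb c a xb = f xb := by
  simp [penalty, infDist_zero_of_mem hGxb, infDist_zero_of_mem hxbD]

theorem gradient_add_eq_zero_of_isLocalMin_penalty [InnerProductSpace ℝ E] [CompleteSpace E]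
    [InnerProductSpace ℝ F] [CompleteSpace F] {c a : ℝ} {x p : E} {y : F}
    (hf : DifferentiableAt ℝ f x) (hG : DifferentiableAt ℝ G x) (hc : 0 ≤ c) (ha : 0 ≤ a)
    (hp : p ∈ projSet D x) (hy : y ∈ projSet C (G x))
    (hmin : IsLocalMin (penalty f G C D xb c a) x) :
    gradient f x + adjoint (fderiv ℝ G x) (c • (G x - y)) + a • (x - p) + (2 : ℝ) • (x - xb)
      = 0 := by
  set ψ : E → ℝ := fun v =>
    f v + c / 2 * ‖G v - y‖ ^ 2 + a / 2 * ‖v - p‖ ^ 2 + ‖v - xb‖ ^ 2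
  have hψ : IsLocalMin ψ x := by
    have hle : ∀ v, penalty f G C D xb c a v ≤ ψ v := fun v => by
      have hC : infDist (G v) C ≤ ‖G v - y‖ := dist_eq_norm (G v) y ▸ infDist_le_dist_of_mem hy.1
      have hD : infDist v D ≤ ‖v - p‖ := dist_eq_norm v p ▸ infDist_le_dist_of_mem hp.1
      unfold penalty ψ
      gcongr <;> exact infDist_nonneg
    have heq : penalty f G C D xb c a x = ψ x := by
      simp only [penalty, ψ, infDist_eq_norm_sub_of_mem_projSet hp,
        infDist_eq_norm_sub_of_mem_projSet hy]
    filter_upwards [hmin] with v hv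
    exact heq ▸ hv.trans (hle v)
  have hgrad : HasGradientAt ψ (gradient f x + (c / 2) • (2 : ℝ) • adjoint (fderiv ℝ G x) (G x - y)
      + (a / 2) • (2 : ℝ) • (x - p) + (2 : ℝ) • (x - xb)) x := by
    refine ((hf.hasGradientAt.add ?_).add ?_).add ?_
    · exact ((hG.hasFDerivAt.sub_const y).hasGradientAt_norm_sq).const_mul (c / 2)
    · exact (hasGradientAt_norm_sub_sq p).const_mul (a / 2)
    · exact hasGradientAt_norm_sub_sq xb
  rw [← hψ.hasGradientAt_eq_zero hgrad, smul_smul, smul_smul, map_smul]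
  congr 3 <;> ring_nf

end Penalty

theorem tendsto_of_penalty_tendsto_zero {E ι : Type*} [NormedAddCommGroup E] {l : Filter ι}
    {K : Set E} (hK : IsCompact K) {g P : E → ℝ} (hg : Continuous g) (hP : Continuous P) {xb : E}
    (hmin : ∀ z ∈ K, P z = 0 → g xb ≤ g z) {x : ι → E} (hxK : ∀ i, x i ∈ K)
    (hPx : Tendsto (P ∘ x) l (𝓝 0)) (hgx : ∀ i, g (x i) + ‖x i - xb‖ ^ 2 ≤ g xb) :
    Tendsto x l (𝓝 xb) := by
  refine hK.tendsto_nhds_of_unique_mapClusterPt (.of_forall hxK) fun z hzK hz => ?_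
  have hPz : P z = 0 :=
    eq_of_nhds_neBot ((hz.continuousAt_comp hP.continuousAt).neBot.mono (inf_le_inf_left _ hPx))
  have hgz : g z + ‖z - xb‖ ^ 2 ≤ g xb :=
    (isClosed_le (f := fun v => g v + ‖v - xb‖ ^ 2) (by fun_prop)
      continuous_const).mem_of_mapClusterPt hz (.of_forall hgx)
  have := hmin z hzK hPz
  rw [← sub_eq_zero, ← norm_eq_zero]
  nlinarith [norm_nonneg (z - xb)]

theorem tendsto_zero_of_sq_le {ι : Type*} {l : Filter ι} {u v : ι → ℝ} (hu : ∀ i, 0 ≤ u i)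
    (huv : ∀ i, u i ^ 2 ≤ v i) (hv : Tendsto v l (𝓝 0)) : Tendsto u l (𝓝 0) :=
  squeeze_zero hu (fun i => Real.le_sqrt_of_sq_le (huv i)) (by simpa using hv.sqrt)

theorem exists_penalty_minimizers {E F : Type*} [NormedAddCommGroup E] [NormedAddCommGroup F]
    {f : E → ℝ} {G : E → F} {C : Set F} {D : Set E} {xb : E} {K : Set E}
    (hf : Continuous f) (hG : Continuous G) (hC : IsClosed C) (hCne : C.Nonempty)
    (hD : IsClosed D) (hDne : D.Nonempty) (hK : IsCompact K) (hxbK : xb ∈ K)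
    (hGxb : G xb ∈ C) (hxbD : xb ∈ D) (hmin : ∀ x ∈ K, G x ∈ C → x ∈ D → f xb ≤ f x)
    {c δ : ℕ → ℝ} (hc : Tendsto c atTop atTop) (hc0 : ∀ k, 0 < c k) (hδ : ∀ k, 0 < δ k) :
    ∃ (a : ℕ → ℝ) (x : ℕ → E), (∀ k, 0 ≤ a k) ∧
      (∀ k, IsMinOn (penalty f G C D xb (c k) (a k)) K (x k)) ∧ (∀ k, infDist (x k) D < δ k) ∧
      Tendsto (fun k => infDist (G (x k)) C) atTop (𝓝 0) ∧
      Tendsto (fun k => infDist (x k) D) atTop (𝓝 0) ∧ Tendsto x atTop (𝓝 xb) := by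
  obtain ⟨m, hm⟩ := hK.bddBelow_image hf.continuousOn
  set M := f xb - m
  have hM : ∀ v ∈ K, f xb - f v ≤ M := fun v hv => by linarith [hm ⟨v, hv, rfl⟩]
  have hM0 : 0 ≤ M := by simpa using hM xb hxbK
  -- the second summand makes `a k * infDist (x k) D ^ 2 ≤ 2 * M` force `infDist (x k) D < δ k`
  set a : ℕ → ℝ := fun k => c k + 2 * (M + 1) / δ k ^ 2
  have ha : ∀ k, 0 < a k := fun k => by have := hc0 k; have := hδ k; positivity
  choose x hxK hxmin using fun k =>
    hK.exists_isMinOn ⟨xb, hxbK⟩ (continuous_penalty hf hG (c k) (a k)).continuousOn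
  have hbound : ∀ k, c k * infDist (G (x k)) C ^ 2 ≤ 2 * M ∧
      a k * infDist (x k) D ^ 2 ≤ 2 * M ∧ f (x k) + ‖x k - xb‖ ^ 2 ≤ f xb := by
    intro k
    have h := penalty_self hGxb hxbD (c k) (a k) ▸ isMinOn_iff.1 (hxmin k) xb hxbK
    have hfx := hM (x k) (hxK k)
    have hcd : 0 ≤ c k * infDist (G (x k)) C ^ 2 := by have := (hc0 k).le; positivity
    have had : 0 ≤ a k * infDist (x k) D ^ 2 := by have := (ha k).le; positivity
    unfold penalty at h
    refine ⟨by nlinarith, by nlinarith, by nlinarith⟩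
  have hdD_lt : ∀ k, infDist (x k) D < δ k := fun k => by
    have h : 2 * (M + 1) / δ k ^ 2 * infDist (x k) D ^ 2 ≤ 2 * M :=
      le_trans (by gcongr; exact le_add_of_nonneg_left (hc0 k).le) (hbound k).2.1
    rw [div_mul_eq_mul_div, div_le_iff₀ (by have := hδ k; positivity)] at h
    exact lt_of_pow_lt_pow_left₀ 2 (hδ k).le (by nlinarith [pow_pos (hδ k) 2])
  have hdC : Tendsto (fun k => infDist (G (x k)) C) atTop (𝓝 0) :=
    tendsto_zero_of_sq_le (fun k => infDist_nonneg)
      (fun k => (le_div_iff₀' (hc0 k)).2 (hbound k).1) (tendsto_const_nhds.div_atTop hc)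
  have hdD : Tendsto (fun k => infDist (x k) D) atTop (𝓝 0) :=
    tendsto_zero_of_sq_le (fun k => infDist_nonneg)
      (fun k => (le_div_iff₀' (ha k)).2 (hbound k).2.1) (tendsto_const_nhds.div_atTop
        (tendsto_atTop_mono (fun k => le_add_of_nonneg_right (by have := hδ k; positivity)) hc))
  refine ⟨a, x, fun k => (ha k).le, hxmin, hdD_lt, hdC, hdD, ?_⟩
  refine tendsto_of_penalty_tendsto_zero hK hf (P := fun v => infDist (G v) C + infDist v D)
    (by fun_prop) (fun z hz hPz => ?_) hxK (by simpa [Function.comp_def] using hdC.add hdD)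
    (fun k => (hbound k).2.2)
  obtain ⟨hzC, hzD⟩ := (add_eq_zero_iff_of_nonneg infDist_nonneg infDist_nonneg).1 hPz
  exact hmin z hz ((hC.mem_iff_infDist_zero hCne).2 hzC) ((hD.mem_iff_infDist_zero hDne).2 hzD)

theorem amStationary_of_penalty_stationary {f : X → ℝ} {G : X → Y} {C : Set Y} {D : Set X}
    {xb : X} (hf : Continuous (gradient f)) (hG : Continuous G) (hC : Convex ℝ C)
    (hGxb : G xb ∈ C) (hxbD : xb ∈ D) {x p : ℕ → X} {y : ℕ → Y} {c a : ℕ → ℝ}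
    (hc : ∀ k, 0 ≤ c k) (ha : ∀ k, 0 ≤ a k) (hp : ∀ k, p k ∈ projSet D (x k))
    (hy : ∀ k, y k ∈ projSet C (G (x k))) (hx : Tendsto x atTop (𝓝 xb))
    (hpx : Tendsto p atTop (𝓝 xb)) (hyx : Tendsto (fun k => G (x k) - y k) atTop (𝓝 0))
    (hmod : ∀ᶠ k in atTop, c k * ‖fderiv ℝ G (p k) - fderiv ℝ G (x k)‖ ≤ 1)
    (hstat : ∀ᶠ k in atTop, gradient f (x k) + adjoint (fderiv ℝ G (x k)) (c k • (G (x k) - y k))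
      + a k • (x k - p k) + (2 : ℝ) • (x k - xb) = 0) :
    AMStationary f G C D xb := by
  set lam : ℕ → Y := fun k => c k • (G (x k) - y k)
  set mid : ℕ → X := fun k =>
    adjoint (fderiv ℝ G (p k)) (lam k) - adjoint (fderiv ℝ G (x k)) (lam k)
  have hmid : Tendsto mid atTop (𝓝 0) := by
    refine squeeze_zero_norm' ?_ (tendsto_norm_zero.comp hyx)
    filter_upwards [hmod] with k hk
    calc ‖mid k‖ = ‖adjoint (fderiv ℝ G (p k) - fderiv ℝ G (x k)) (lam k)‖ := by
          simp only [mid, map_sub, sub_apply]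
      _ ≤ ‖fderiv ℝ G (p k) - fderiv ℝ G (x k)‖ * ‖lam k‖ := by
          rw [← LinearIsometryEquiv.norm_map adjoint]
          exact ContinuousLinearMap.le_opNorm _ _
      _ = c k * ‖fderiv ℝ G (p k) - fderiv ℝ G (x k)‖ * ‖G (x k) - y k‖ := by
          rw [norm_smul, Real.norm_of_nonneg (hc k)]
          ring
      _ ≤ ‖G (x k) - y k‖ := mul_le_of_le_one_left (norm_nonneg _) hk
  refine ⟨hGxb, hxbD, p,
    fun k => gradient f (p k) + adjoint (fderiv ℝ G (p k)) (lam k) + a k • (x k - p k),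
    fun k => G (p k) - y k, lam, hpx, ?_, ?_,
    fun k => ⟨?_, _, smul_sub_mem_limNormalCone (hp k) (ha k), rfl⟩⟩
  · have h := (((hf.tendsto xb).comp hpx).sub ((hf.tendsto xb).comp hx)).add hmid |>.sub
      ((hx.sub_const xb).const_smul (2 : ℝ))
    simp only [sub_self, add_zero, smul_zero] at h
    refine h.congr' ?_
    filter_upwards [hstat] with k hk
    simp only [Function.comp_apply, mid]
    linear_combination (norm := module) -hk
  · have h := (((hG.tendsto xb).comp hpx).sub ((hG.tendsto xb).comp hx)).add hyx
    simp only [sub_self, add_zero] at h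
    exact h.congr fun k => by simp
  · rw [sub_sub_cancel]
    exact smul_sub_mem_convNormalCone hC (hy k) (hc k)

/-- every local minimizer of (P) is AM-stationary. -/
theorem local_minimizer_is_AM_stationary
    (f : X → ℝ) (G : X → Y) (C : Set Y) (D : Set X)
    (hf : ContDiff ℝ 1 f) (hG : ContDiff ℝ 1 G)
    (hCne : C.Nonempty) (hCcl : IsClosed C) (hCconv : Convex ℝ C)
    (hDne : D.Nonempty) (hDcl : IsClosed D)
    (xb : X) (hGxb : G xb ∈ C) (hxbD : xb ∈ D)
    (hmin : ∃ U ∈ 𝓝 xb, ∀ x ∈ U, G x ∈ C → x ∈ D → f xb ≤ f x) :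
    AMStationary f G C D xb := by
  obtain ⟨U, hU, hUmin⟩ := hmin
  obtain ⟨r, hr, hrU⟩ := nhds_basis_closedBall.mem_iff.1 hU
  choose δ hδ0 hδ using fun k : ℕ => uniformContinuousOn_iff.1
    ((isCompact_closedBall xb 1).uniformContinuousOn_of_continuous
      (hG.continuous_fderiv one_ne_zero).continuousOn) (1 / (k + 1)) (by positivity)
  obtain ⟨a, x, ha, hxmin, hdδ, hdC, hdD, hx⟩ := exists_penalty_minimizers hf.continuous
    hG.continuous hCcl hCne hDcl hDne (isCompact_closedBall xb r) (mem_closedBall_self hr.le)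
    hGxb hxbD (fun x hx => hUmin x (hrU hx)) (c := fun k => k + 1)
    (tendsto_atTop_add_const_right _ 1 tendsto_natCast_atTop_atTop) (fun k => by positivity) hδ0
  choose p hp using fun k => exists_mem_projSet hDcl hDne (x k)
  choose y hy using fun k => exists_mem_projSet hCcl hCne (G (x k))
  have hxp : ∀ k, dist (x k) (p k) = infDist (x k) D := fun k => by
    rw [infDist_eq_norm_sub_of_mem_projSet (hp k), dist_eq_norm]
  have hpx : Tendsto p atTop (𝓝 xb) := hx.congr_dist (by simpa only [hxp] using hdD)
  refine amStationary_of_penalty_stationary hf.continuous_gradient hG.continuous hCconv hGxb hxbD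
    (c := fun k => k + 1) (fun k => by positivity) ha hp hy hx hpx
    (tendsto_zero_iff_norm_tendsto_zero.2
      (hdC.congr fun k => infDist_eq_norm_sub_of_mem_projSet (hy k))) ?_ ?_
  · filter_upwards [hx (closedBall_mem_nhds xb one_pos), hpx (closedBall_mem_nhds xb one_pos)]
      with k hxk hpk
    have h := hδ k (p k) hpk (x k) hxk ((dist_comm _ _).trans_lt ((hxp k).trans_lt (hdδ k)))
    rw [dist_eq_norm, lt_div_iff₀ (by positivity)] at h
    linarith
  · filter_upwards [hx (ball_mem_nhds xb hr)] with k hk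
    exact gradient_add_eq_zero_of_isLocalMin_penalty (hf.differentiable one_ne_zero _)
      (hG.differentiable one_ne_zero _) (by positivity) (ha k) (hp k) (hy k)
      ((hxmin k).isLocalMin (mem_of_superset (isOpen_ball.mem_nhds hk) ball_subset_closedBall))
end
end

section
/- A feasible point (x̄, ȳ) of the decomposed problem (i.e., x̄ = ȳ, G(x̄) ∈ C, ȳ ∈ D) is an AM-stationary point of the decomposed problem if and only if there exist sequences x^k → x̄ in X, y^k → ȳ with y^k ∈ D, ε₁^k → 0 in X, ε₂^k → 0 in X, z^k → 0 in Y, and multipliers λ^k ∈ Y, μ^k ∈ X such that for all k: ε₁^k = ∇f(x^k) + G'(x^k)*λ^k + μ^k, ε₂^k ∈ −μ^k + N_D^lim(y^k), and λ^k ∈ N_C(G(x^k) − z^k). -/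
/-! The decomposed data are separable. Projecting onto `X × D` leaves the first coordinate
untouched, so the limiting normal cone to `X × D` at `(x, y)` is `{0} × N_D^lim(y)`; the normal
cone to `C × {0}` at `(u, v)` is `N_C(u) × X` and forces the second slack coordinate to be
`x - y`. Moreover `∇f̃(x, y) = (∇f(x), 0)` and `G̃'(x, y)*(λ, μ) = (G'(x)*λ + μ, -μ)`. Reading the
AM-stationarity system of the decomposed problem coordinatewise gives the componentwise one, with
`μ` the multiplier of the consensus constraint `x - y = 0`; conversely, the pairs reassemble, and
the slack `x^k - y^k` tends to `x̄ - ȳ = 0`. -/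

open Filter Topology RealInnerProductSpace

noncomputable section

variable {X Y : Type*} [NormedAddCommGroup X] [InnerProductSpace ℝ X] [FiniteDimensional ℝ X]
  [NormedAddCommGroup Y] [InnerProductSpace ℝ Y] [FiniteDimensional ℝ Y]

open WithLp

section ProdLp

variable {E F : Type*}

lemma WithLp.prod_ext_iff {p} {a b : WithLp p (E × F)} : a = b ↔ a.fst = b.fst ∧ a.snd = b.snd :=
  (WithLp.ext_iff p).trans Prod.ext_iff

lemma WithLp.tendsto_prod_iff {p} [TopologicalSpace E] [TopologicalSpace F] {ι : Type*}
    {l : Filter ι} {u : ι → WithLp p (E × F)} {a : WithLp p (E × F)} :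
    Tendsto u l (𝓝 a) ↔
      Tendsto (fun k => (u k).fst) l (𝓝 a.fst) ∧ Tendsto (fun k => (u k).snd) l (𝓝 a.snd) := by
  rw [(WithLp.homeomorphProd p E F).isInducing.tendsto_nhds_iff, nhds_prod_eq, tendsto_prod_iff']
  rfl

lemma WithLp.norm_sub_sq_prod [SeminormedAddCommGroup E] [SeminormedAddCommGroup F]
    (a b : WithLp 2 (E × F)) : ‖a - b‖ ^ 2 = ‖a.fst - b.fst‖ ^ 2 + ‖a.snd - b.snd‖ ^ 2 :=
  WithLp.prod_norm_sq_eq_of_L2 (a - b)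

end ProdLp

section Projection

variable {E F : Type*} [NormedAddCommGroup E] [NormedAddCommGroup F]

lemma mem_projSet_iff_sq {D : Set E} {x z : E} :
    z ∈ projSet D x ↔ z ∈ D ∧ ∀ w ∈ D, ‖z - x‖ ^ 2 ≤ ‖w - x‖ ^ 2 := by
  simp only [projSet, Set.mem_ofPred_eq, sq_le_sq₀ (norm_nonneg _) (norm_nonneg _)]

lemma mem_projSet_univ_prod_iff {D : Set F} {v z : WithLp 2 (E × F)} :
    z ∈ projSet {p | p.snd ∈ D} v ↔ z.fst = v.fst ∧ z.snd ∈ projSet D v.snd := by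
  simp only [mem_projSet_iff_sq, Set.mem_ofPred_eq, WithLp.norm_sub_sq_prod]
  constructor
  · rintro ⟨hzD, hmin⟩
    have hfst : z.fst = v.fst := by
      have h := hmin (toLp 2 (v.fst, z.snd)) hzD
      simp only [toLp_fst, toLp_snd, sub_self, norm_zero] at h
      have hsq : ‖z.fst - v.fst‖ ^ 2 ≤ 0 := by linarith
      simpa [sub_eq_zero] using hsq
    refine ⟨hfst, hzD, fun w hw => ?_⟩
    have h := hmin (toLp 2 (v.fst, w)) hw
    simp only [toLp_fst, toLp_snd, hfst, sub_self, norm_zero] at h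
    linarith
  · rintro ⟨hfst, hzD, hmin⟩
    refine ⟨hzD, fun w hw => ?_⟩
    rw [hfst, sub_self, norm_zero]
    nlinarith [hmin w.snd hw, sq_nonneg ‖w.fst - v.fst‖]

end Projection

section LimitingNormal

variable {E F : Type*} [NormedAddCommGroup E] [NormedSpace ℝ E] [NormedAddCommGroup F]
  [NormedSpace ℝ F]

lemma exists_proximalNormal_univ_prod_iff {D : Set F} {v n : WithLp 2 (E × F)} :
    (∃ t : ℝ, ∃ p, 0 ≤ t ∧ p ∈ projSet {p | p.snd ∈ D} v ∧ n = t • (v - p)) ↔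
      n.fst = 0 ∧ ∃ t : ℝ, ∃ p, 0 ≤ t ∧ p ∈ projSet D v.snd ∧ n.snd = t • (v.snd - p) := by
  simp only [mem_projSet_univ_prod_iff, WithLp.prod_ext_iff, smul_fst, smul_snd, sub_fst, sub_snd]
  constructor
  · rintro ⟨t, p, ht, ⟨hp₁, hp₂⟩, hn₁, hn₂⟩
    exact ⟨by rw [hn₁, hp₁, sub_self, smul_zero], t, p.snd, ht, hp₂, hn₂⟩
  · rintro ⟨hn₁, t, p, ht, hp, hn₂⟩
    exact ⟨t, toLp 2 (v.fst, p), ht, ⟨rfl, hp⟩, by simp [hn₁], hn₂⟩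

lemma mem_limNormalCone_univ_prod_iff {D : Set F} {q n : WithLp 2 (E × F)} :
    n ∈ limNormalCone {p | p.snd ∈ D} q ↔ n.fst = 0 ∧ n.snd ∈ limNormalCone D q.snd := by
  simp only [limNormalCone, Set.mem_ofPred_eq, exists_proximalNormal_univ_prod_iff]
  constructor
  · rintro ⟨hq, v, ns, hv, hns, hprox⟩
    have hn₁ : n.fst = 0 :=
      tendsto_nhds_unique ((WithLp.tendsto_prod_iff.mp hns).1)
        (by simpa only [fun j => (hprox j).1] using tendsto_const_nhds)
    exact ⟨hn₁, hq, fun j => (v j).snd, fun j => (ns j).snd, (WithLp.tendsto_prod_iff.mp hv).2,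
      (WithLp.tendsto_prod_iff.mp hns).2, fun j => (hprox j).2⟩
  · rintro ⟨hn₁, hq, v, ns, hv, hns, hprox⟩
    refine ⟨hq, fun j => toLp 2 (q.fst, v j), fun j => toLp 2 (0, ns j),
      WithLp.tendsto_prod_iff.mpr ⟨tendsto_const_nhds, hv⟩,
      WithLp.tendsto_prod_iff.mpr ⟨hn₁ ▸ tendsto_const_nhds, hns⟩,
      fun j => ⟨rfl, hprox j⟩⟩

end LimitingNormal

section InnerProduct

variable {E F : Type*} [NormedAddCommGroup E] [InnerProductSpace ℝ E] [NormedAddCommGroup F]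
  [InnerProductSpace ℝ F]

lemma mem_convNormalCone_prod_zero_iff {C : Set E} {q l : WithLp 2 (E × F)} :
    l ∈ convNormalCone {z | z.fst ∈ C ∧ z.snd = 0} q ↔
      q.snd = 0 ∧ l.fst ∈ convNormalCone C q.fst := by
  simp only [convNormalCone, Set.mem_ofPred_eq, WithLp.prod_inner_apply, ofLp_fst, ofLp_snd,
    sub_fst, sub_snd]
  constructor
  · rintro ⟨⟨hqC, hq₂⟩, hl⟩
    refine ⟨hq₂, hqC, fun c hc => ?_⟩
    simpa [hq₂] using hl (toLp 2 (c, 0)) ⟨hc, rfl⟩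
  · rintro ⟨hq₂, hqC, hl⟩
    refine ⟨⟨hqC, hq₂⟩, fun c ⟨hc, hc₂⟩ => ?_⟩
    simpa [hc₂, hq₂] using hl c.fst hc

def consensusDeriv (A : E →L[ℝ] F) : WithLp 2 (E × E) →L[ℝ] WithLp 2 (F × E) :=
  (WithLp.prodContinuousLinearEquiv 2 ℝ F E).symm.toContinuousLinearMap ∘L
    ((A ∘L WithLp.fstL 2 ℝ E E).prod (WithLp.fstL 2 ℝ E E - WithLp.sndL 2 ℝ E E))

@[simp]
lemma consensusDeriv_apply (A : E →L[ℝ] F) (h : WithLp 2 (E × E)) :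
    consensusDeriv A h = toLp 2 (A h.fst, h.fst - h.snd) :=
  rfl

lemma HasFDerivAt.consensus {G : E → F} {A : E →L[ℝ] F} {w : WithLp 2 (E × E)}
    (hG : HasFDerivAt G A w.fst) :
    HasFDerivAt (fun p : WithLp 2 (E × E) => toLp 2 (G p.fst, p.fst - p.snd))
      (consensusDeriv A) w :=
  (WithLp.prodContinuousLinearEquiv 2 ℝ F E).symm.hasFDerivAt.comp w
    ((hG.comp w (WithLp.fstL 2 ℝ E E).hasFDerivAt).prodMk
      (WithLp.fstL 2 ℝ E E - WithLp.sndL 2 ℝ E E).hasFDerivAt)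

variable [CompleteSpace E] [CompleteSpace F]

lemma gradient_comp_fst {f : E → ℝ} {w : WithLp 2 (E × F)} (hf : DifferentiableAt ℝ f w.fst) :
    gradient (fun p : WithLp 2 (E × F) => f p.fst) w = toLp 2 (gradient f w.fst, 0) := by
  refine HasGradientAt.gradient (hasGradientAt_iff_hasFDerivAt.mpr ?_)
  have hdual : InnerProductSpace.toDual ℝ _ (toLp 2 (gradient f w.fst, (0 : F))) =
      InnerProductSpace.toDual ℝ E (gradient f w.fst) ∘L WithLp.fstL 2 ℝ E F := by
    ext h
    simp
  rw [hdual]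
  exact hf.hasGradientAt.hasFDerivAt.comp w (WithLp.fstL 2 ℝ E F).hasFDerivAt

lemma adjoint_consensusDeriv_apply (A : E →L[ℝ] F) (l : WithLp 2 (F × E)) :
    (consensusDeriv A).adjoint l = toLp 2 (A.adjoint l.fst + l.snd, -l.snd) := by
  refine ext_inner_right ℝ fun h => ?_
  simp only [ContinuousLinearMap.adjoint_inner_left, consensusDeriv_apply,
    WithLp.prod_inner_apply, ofLp_fst, ofLp_snd, inner_add_left, inner_neg_left, inner_sub_right]
  ring

end InnerProduct

theorem AM_stationary_decomposed_iff_componentwise_general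
    (f : X → ℝ) (G : X → Y) (C : Set Y) (D : Set X)
    (hf : ContDiff ℝ 1 f) (hG : ContDiff ℝ 1 G)
    (xb yb : X) (hfeas : xb = yb ∧ G xb ∈ C ∧ yb ∈ D) :
    (∃ (w εt : ℕ → WithLp 2 (X × X)) (zt lamt : ℕ → WithLp 2 (Y × X)),
      Tendsto w atTop (𝓝 ((WithLp.equiv 2 (X × X)).symm (xb, yb))) ∧
      Tendsto εt atTop (𝓝 0) ∧ Tendsto zt atTop (𝓝 0) ∧
      ∀ k,
        lamt k ∈ convNormalCone
            {z : WithLp 2 (Y × X) |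
              (WithLp.equiv 2 (Y × X) z).1 ∈ C ∧ (WithLp.equiv 2 (Y × X) z).2 = 0}
            ((WithLp.equiv 2 (Y × X)).symm
              (G (WithLp.equiv 2 (X × X) (w k)).1,
                (WithLp.equiv 2 (X × X) (w k)).1 - (WithLp.equiv 2 (X × X) (w k)).2)
              - zt k) ∧
        ∃ nv ∈ limNormalCone
            {p : WithLp 2 (X × X) | (WithLp.equiv 2 (X × X) p).2 ∈ D} (w k),
          εt k =
            gradient (fun p : WithLp 2 (X × X) => f (WithLp.equiv 2 (X × X) p).1) (w k) +
            ContinuousLinearMap.adjoint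
              (fderiv ℝ (fun p : WithLp 2 (X × X) =>
                (WithLp.equiv 2 (Y × X)).symm
                  (G (WithLp.equiv 2 (X × X) p).1,
                    (WithLp.equiv 2 (X × X) p).1 - (WithLp.equiv 2 (X × X) p).2)) (w k))
              (lamt k) + nv)
    ↔
    (∃ (xs ys ε1 ε2 : ℕ → X) (zs lam : ℕ → Y) (mu : ℕ → X),
      Tendsto xs atTop (𝓝 xb) ∧ Tendsto ys atTop (𝓝 yb) ∧ (∀ k, ys k ∈ D) ∧
      Tendsto ε1 atTop (𝓝 0) ∧ Tendsto ε2 atTop (𝓝 0) ∧ Tendsto zs atTop (𝓝 0) ∧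
      ∀ k,
        ε1 k = gradient f (xs k) +
          ContinuousLinearMap.adjoint (fderiv ℝ G (xs k)) (lam k) + mu k ∧
        (∃ nv ∈ limNormalCone D (ys k), ε2 k = -(mu k) + nv) ∧
        lam k ∈ convNormalCone C (G (xs k) - zs k)) := by
  have hgrad (w : WithLp 2 (X × X)) :=
    gradient_comp_fst (F := X) (hf.differentiable one_ne_zero w.fst)
  have hadj (w : WithLp 2 (X × X)) (l : WithLp 2 (Y × X)) :
      (fderiv ℝ (fun p : WithLp 2 (X × X) => toLp 2 (G p.fst, p.fst - p.snd)) w).adjoint l =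
        toLp 2 ((fderiv ℝ G w.fst).adjoint l.fst + l.snd, -l.snd) := by
    rw [(hG.differentiable one_ne_zero w.fst).hasFDerivAt.consensus.fderiv,
      adjoint_consensusDeriv_apply]
  simp only [WithLp.equiv_apply, WithLp.equiv_symm_apply, ofLp_fst, ofLp_snd, hgrad, hadj,
    mem_convNormalCone_prod_zero_iff, mem_limNormalCone_univ_prod_iff, WithLp.tendsto_prod_iff,
    WithLp.prod_ext_iff, add_fst, add_snd, sub_fst, sub_snd, toLp_fst, toLp_snd, zero_fst,
    zero_snd, zero_add]
  constructor
  · rintro ⟨w, ε, z, l, ⟨hx, hy⟩, ⟨hε₁, hε₂⟩, ⟨hz, -⟩, hk⟩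
    refine ⟨fun k => (w k).fst, fun k => (w k).snd, fun k => (ε k).fst, fun k => (ε k).snd,
      fun k => (z k).fst, fun k => (l k).fst, fun k => (l k).snd, hx, hy,
      fun k => ?_, hε₁, hε₂, hz, fun k => ?_⟩
    · obtain ⟨-, nv, ⟨-, hnv⟩, -⟩ := hk k
      exact hnv.1
    · obtain ⟨⟨-, hl⟩, nv, ⟨hnv₁, hnv₂⟩, he₁, he₂⟩ := hk k
      exact ⟨he₁.trans (by rw [hnv₁, add_zero, ← add_assoc]), ⟨nv.snd, hnv₂, he₂⟩, hl⟩
  · rintro ⟨xs, ys, ε₁, ε₂, zs, lam, mu, hx, hy, -, hε₁, hε₂, hz, hk⟩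
    choose nv hnv hε₂k using fun k => (hk k).2.1
    have hxy : Tendsto (fun k => xs k - ys k) atTop (𝓝 0) := by
      simpa only [hfeas.1, sub_self] using hx.sub hy
    refine ⟨fun k => toLp 2 (xs k, ys k), fun k => toLp 2 (ε₁ k, ε₂ k),
      fun k => toLp 2 (zs k, xs k - ys k), fun k => toLp 2 (lam k, mu k),
      ⟨hx, hy⟩, ⟨hε₁, hε₂⟩, ⟨hz, hxy⟩, fun k => ⟨⟨sub_self _, (hk k).2.2⟩, toLp 2 (0, nv k),
      ⟨rfl, hnv k⟩, ?_, hε₂k k⟩⟩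
    simp only [toLp_fst, toLp_snd, add_zero, ← add_assoc]
    exact (hk k).1

/-- characterization of AM-stationary points of the decomposed problem
`min f(x) s.t. x - y = 0, G(x) ∈ C, y ∈ D`, written in the abstract form (P) with data
`f̃(x,y) = f(x)`, `G̃(x,y) = (G(x), x - y)`, `C̃ = C × {0}`, `D̃ = X × D` (with the ℓ²
product structure), in terms of the component sequences. -/
theorem AM_stationary_decomposed_iff_componentwise
    (f : X → ℝ) (G : X → Y) (C : Set Y) (D : Set X)
    (hf : ContDiff ℝ 1 f) (hG : ContDiff ℝ 1 G)
    (hCne : C.Nonempty) (hCcl : IsClosed C) (hCconv : Convex ℝ C)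
    (hDne : D.Nonempty) (hDcl : IsClosed D)
    (xb yb : X) (hfeas : xb = yb ∧ G xb ∈ C ∧ yb ∈ D) :
    (∃ (w εt : ℕ → WithLp 2 (X × X)) (zt lamt : ℕ → WithLp 2 (Y × X)),
      Tendsto w atTop (𝓝 ((WithLp.equiv 2 (X × X)).symm (xb, yb))) ∧
      Tendsto εt atTop (𝓝 0) ∧ Tendsto zt atTop (𝓝 0) ∧
      ∀ k,
        lamt k ∈ convNormalCone
            {z : WithLp 2 (Y × X) |
              (WithLp.equiv 2 (Y × X) z).1 ∈ C ∧ (WithLp.equiv 2 (Y × X) z).2 = 0}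
            ((WithLp.equiv 2 (Y × X)).symm
              (G (WithLp.equiv 2 (X × X) (w k)).1,
                (WithLp.equiv 2 (X × X) (w k)).1 - (WithLp.equiv 2 (X × X) (w k)).2)
              - zt k) ∧
        ∃ nv ∈ limNormalCone
            {p : WithLp 2 (X × X) | (WithLp.equiv 2 (X × X) p).2 ∈ D} (w k),
          εt k =
            gradient (fun p : WithLp 2 (X × X) => f (WithLp.equiv 2 (X × X) p).1) (w k) +
            ContinuousLinearMap.adjoint
              (fderiv ℝ (fun p : WithLp 2 (X × X) =>
                (WithLp.equiv 2 (Y × X)).symm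
                  (G (WithLp.equiv 2 (X × X) p).1,
                    (WithLp.equiv 2 (X × X) p).1 - (WithLp.equiv 2 (X × X) p).2)) (w k))
              (lamt k) + nv)
    ↔
    (∃ (xs ys ε1 ε2 : ℕ → X) (zs lam : ℕ → Y) (mu : ℕ → X),
      Tendsto xs atTop (𝓝 xb) ∧ Tendsto ys atTop (𝓝 yb) ∧ (∀ k, ys k ∈ D) ∧
      Tendsto ε1 atTop (𝓝 0) ∧ Tendsto ε2 atTop (𝓝 0) ∧ Tendsto zs atTop (𝓝 0) ∧
      ∀ k,
        ε1 k = gradient f (xs k) +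
          ContinuousLinearMap.adjoint (fderiv ℝ G (xs k)) (lam k) + mu k ∧
        (∃ nv ∈ limNormalCone D (ys k), ε2 k = -(mu k) + nv) ∧
        lam k ∈ convNormalCone C (G (xs k) - zs k)) :=
  AM_stationary_decomposed_iff_componentwise_general f G C D hf hG xb yb hfeas
end
end

section
/- Let X ∈ ℝ^{m×n} with singular value decomposition X = U Σ Vᵀ, where U ∈ ℝ^{m×m} and V ∈ ℝ^{n×n} are orthogonal and Σ ∈ ℝ^{m×n} is diagonal with Σ_{ii} = σ_i ≥ 0 in nonincreasing order (σ_i ≥ σ_j for i ≤ j, i,j ≤ q := min(m,n)). For κ ≤ q − 1, let Σ̂ be obtained from Σ by setting Σ̂_{ii} = σ_i for i ≤ κ and all other entries to zero, and set X̂ = U Σ̂ Vᵀ. Then X̂ is a projection of X onto D = {Z ∈ ℝ^{m×n} : rank(Z) ≤ κ} with respect to the Frobenius norm; i.e., rank(X̂) ≤ κ and ‖X̂ − X‖_F ≤ ‖Z − X‖_F for every Z ∈ ℝ^{m×n} with rank(Z) ≤ κ. -/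
noncomputable section

open Matrix

def frobNorm {m n : ℕ} (A : Matrix (Fin m) (Fin n) ℝ) : ℝ :=
  Real.sqrt (∑ i, ∑ j, A i j ^ 2)

open Module Finset

/-!
By orthogonal invariance of the Frobenius norm, `Z` may be replaced by `W = Uᵀ Z V`, which still
has rank at most `κ`, and `A` by `Σ`. Let `K` be the column space of `W`. The `j`-th column of `Σ`
is `σ_j e_j`, and its distance to the `j`-th column of `W`, a vector of `K`, is at least the norm
of its projection onto `Kᗮ`. Hence `‖W - Σ‖² ≥ ∑ σ_j² w_j` with `w_j = ‖P_{Kᗮ} e_j‖² ∈ [0, 1]`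
and `∑ w_j = dim Kᗮ ≥ m - κ` (the trace of a projection is its rank). As the `σ_j²` decrease,
such a weighted sum is smallest when the weight sits on the last `m - κ` indices, and then it is
`∑_{j ≥ κ} σ_j² = ‖Σ̂ - Σ‖²`.
-/

theorem OrthonormalBasis.sum_norm_starProjection_sq {𝕜 E ι : Type*} [RCLike 𝕜]
    [NormedAddCommGroup E] [InnerProductSpace 𝕜 E] [FiniteDimensional 𝕜 E] [Fintype ι]
    (b : OrthonormalBasis ι 𝕜 E) (K : Submodule 𝕜 E) :
    ∑ i, ‖K.starProjection (b i)‖ ^ 2 = finrank 𝕜 K := by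
  have htrace := (LinearMap.IsIdempotentElem.isProj_range _
    (ContinuousLinearMap.IsIdempotentElem.toLinearMap K.isIdempotentElem_starProjection)).trace
  rw [K.range_starProjection, LinearMap.trace_eq_sum_inner _ b] at htrace
  have := congrArg RCLike.re htrace
  rw [map_sum, RCLike.natCast_re] at this
  rw [← this]
  refine Finset.sum_congr rfl fun i _ => ?_
  rw [ContinuousLinearMap.coe_coe, ← K.inner_starProjection_left_eq_right,
    K.re_inner_starProjection_eq_normSq, Submodule.starProjection_apply, Submodule.coe_norm]

theorem Submodule.norm_starProjection_orthogonal_le_norm_sub {𝕜 E : Type*} [RCLike 𝕜]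
    [NormedAddCommGroup E] [InnerProductSpace 𝕜 E] (K : Submodule 𝕜 E)
    [K.HasOrthogonalProjection] (x : E) {w : E} (hw : w ∈ K) :
    ‖Kᗮ.starProjection x‖ ≤ ‖x - w‖ := by
  have hw0 : Kᗮ.starProjection w = 0 :=
    Kᗮ.starProjection_apply_eq_zero_iff.mpr (K.le_orthogonal_orthogonal hw)
  simpa only [map_sub, hw0, sub_zero] using Kᗮ.norm_starProjection_apply_le (x - w)

theorem EuclideanSpace.norm_map_sq_of_support_subsingleton {𝕜 ι F : Type*} [RCLike 𝕜]
    [Fintype ι] [DecidableEq ι] [SeminormedAddCommGroup F] [NormedSpace 𝕜 F]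
    (T : EuclideanSpace 𝕜 ι →ₗ[𝕜] F) {v : ι → 𝕜} (hv : v.support.Subsingleton) :
    ‖T (WithLp.toLp 2 v)‖ ^ 2 = ∑ i, ‖v i‖ ^ 2 * ‖T (EuclideanSpace.single i 1)‖ ^ 2 := by
  rcases hv.eq_empty_or_singleton with hv | ⟨i₀, hv⟩
  · obtain rfl : v = 0 := Function.support_eq_empty_iff.mp hv
    simp
  · have hvi : ∀ i ≠ i₀, v i = 0 := fun i hi =>
      Function.notMem_support.mp (by rw [hv]; exact hi)
    have hv₀ : WithLp.toLp 2 v = v i₀ • EuclideanSpace.single i₀ 1 := by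
      ext i
      by_cases hi : i = i₀
      · simp [hi]
      · simp [hi, hvi i hi]
    rw [Finset.sum_eq_single i₀ (fun i _ hi => by simp [hvi i hi]) (by simp), hv₀,
      map_smul, norm_smul, mul_pow]

theorem Finset.sum_compl_le_sum_mul {ι : Type*} [Fintype ι] [DecidableEq ι] (t : Finset ι)
    {a w : ι → ℝ} (ha : ∀ i, 0 ≤ a i) (hat : ∀ i ∈ t, ∀ i' ∉ t, a i' ≤ a i)
    (hw₀ : ∀ i, 0 ≤ w i) (hw₁ : ∀ i, w i ≤ 1) (hw : (#tᶜ : ℝ) ≤ ∑ i, w i) :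
    ∑ i ∈ tᶜ, a i ≤ ∑ i, a i * w i := by
  obtain ⟨c, hc₀, hct, hctc⟩ : ∃ c, 0 ≤ c ∧ (∀ i ∈ t, c ≤ a i) ∧ ∀ i ∉ t, a i ≤ c := by
    rcases tᶜ.eq_empty_or_nonempty with h | h
    · exact ⟨0, le_rfl, fun i _ => ha i,
        fun i hi => by simp_all [Finset.eq_empty_iff_forall_notMem]⟩
    · obtain ⟨i₀, hi₀, hmax⟩ := Finset.exists_max_image tᶜ a h
      exact ⟨a i₀, ha i₀, fun i hi => hat i hi i₀ (Finset.mem_compl.mp hi₀),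
        fun i hi => hmax i (Finset.mem_compl.mpr hi)⟩
  -- bathtub principle: as `c` separates the values of `a` on `t` from those off `t`,
  -- every summand on the right is nonnegative
  have hsplit : ∑ i, a i * w i - ∑ i ∈ tᶜ, a i =
      ∑ i, (a i - c) * (w i - if i ∈ t then 0 else 1) + c * (∑ i, w i - #tᶜ) := by
    simp only [mul_sub, sub_mul, Finset.sum_sub_distrib, ← Finset.mul_sum]
    simp [Finset.sum_ite, Finset.filter_not, Finset.compl_eq_univ_sdiff]
    ring
  have hterm : ∀ i, 0 ≤ (a i - c) * (w i - if i ∈ t then 0 else 1) := by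
    intro i
    by_cases hi : i ∈ t
    · simpa [hi] using mul_nonneg (sub_nonneg.mpr (hct i hi)) (hw₀ i)
    · simpa [hi] using mul_nonneg_of_nonpos_of_nonpos (sub_nonpos.mpr (hctc i hi))
        (sub_nonpos.mpr (hw₁ i))
  have := Finset.sum_nonneg fun i (_ : i ∈ Finset.univ) => hterm i
  nlinarith [mul_nonneg hc₀ (sub_nonneg.mpr hw)]

namespace Matrix

variable {ι J : Type*} [Fintype ι] [Fintype J]

theorem rank_le_card_of_forall_notMem_eq_zero {R : Type*} [DecidableEq ι] [Field R]
    {A : Matrix ι J R} (t : Finset ι) (hA : ∀ i ∉ t, ∀ j, A i j = 0) : A.rank ≤ #t := by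
  classical
  have hA' : A = diagonal (fun i => if i ∈ t then (1 : R) else 0) * A := by
    ext i j
    by_cases hi : i ∈ t <;> simp [hi, hA i]
  rw [hA']
  refine (rank_mul_le_left _ _).trans_eq ?_
  rw [rank_diagonal, Fintype.card_subtype]
  congr 1
  ext i
  simp

theorem sum_sq_eq_trace_transpose_mul (A : Matrix ι J ℝ) :
    ∑ i, ∑ j, A i j ^ 2 = (Aᵀ * A).trace := by
  simp only [trace, diag, mul_apply, transpose_apply, sq]
  exact Finset.sum_comm

theorem sum_sq_eq_sum_norm_col_sq (A : Matrix ι J ℝ) :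
    ∑ i, ∑ j, A i j ^ 2 = ∑ j, ‖WithLp.toLp 2 (A.col j)‖ ^ 2 := by
  simp [EuclideanSpace.norm_sq_eq, Finset.sum_comm (γ := ι)]

theorem sum_compl_sum_sq_le_sum_sq_sub_of_rank_le [DecidableEq ι] {S : Matrix ι J ℝ}
    (hS : ∀ j, (S.col j).support.Subsingleton) (t : Finset ι)
    (ht : ∀ i ∈ t, ∀ i' ∉ t, ∑ j, S i' j ^ 2 ≤ ∑ j, S i j ^ 2)
    {W : Matrix ι J ℝ} (hW : W.rank ≤ #t) :
    ∑ i ∈ tᶜ, ∑ j, S i j ^ 2 ≤ ∑ i, ∑ j, (W - S) i j ^ 2 := by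
  set K : Submodule ℝ (EuclideanSpace ℝ ι) :=
    (Submodule.span ℝ (Set.range W.col)).map
      ((WithLp.linearEquiv 2 ℝ (ι → ℝ)).symm : (ι → ℝ) →ₗ[ℝ] EuclideanSpace ℝ ι)
  have hK : finrank ℝ K = W.rank := by
    rw [LinearEquiv.finrank_map_eq, rank_eq_finrank_span_cols]
  have hWK : ∀ j, WithLp.toLp 2 (W.col j) ∈ K := fun j =>
    Submodule.mem_map_of_mem (Submodule.subset_span ⟨j, rfl⟩)
  set w : ι → ℝ := fun i => ‖Kᗮ.starProjection (EuclideanSpace.single i 1)‖ ^ 2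
  have hw₁ : ∀ i, w i ≤ 1 := fun i => by
    have := Kᗮ.norm_starProjection_apply_le (EuclideanSpace.single i (1 : ℝ))
    rw [PiLp.norm_single, norm_one] at this
    exact pow_le_one₀ (norm_nonneg _) this
  have hw : (#tᶜ : ℝ) ≤ ∑ i, w i := by
    have h₁ := (EuclideanSpace.basisFun ι ℝ).sum_norm_starProjection_sq Kᗮ
    have h₂ := K.finrank_add_finrank_orthogonal
    have h₃ := t.card_add_card_compl
    simp only [EuclideanSpace.basisFun_apply, finrank_euclideanSpace] at h₁ h₂
    rw [h₁]
    exact_mod_cast (by omega : #tᶜ ≤ finrank ℝ Kᗮ)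
  calc ∑ i ∈ tᶜ, ∑ j, S i j ^ 2
      ≤ ∑ i, (∑ j, S i j ^ 2) * w i :=
        t.sum_compl_le_sum_mul (fun i => by positivity) ht (fun i => by positivity) hw₁ hw
    _ = ∑ j, ‖Kᗮ.starProjection (WithLp.toLp 2 (S.col j))‖ ^ 2 := by
        simp only [Finset.sum_mul]
        rw [Finset.sum_comm]
        refine Finset.sum_congr rfl fun j _ => ?_
        rw [← ContinuousLinearMap.coe_coe,
          EuclideanSpace.norm_map_sq_of_support_subsingleton _ (hS j)]
        simp [w, Real.norm_eq_abs, sq_abs]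
    _ ≤ ∑ j, ‖WithLp.toLp 2 (S.col j) - WithLp.toLp 2 (W.col j)‖ ^ 2 := by
        gcongr with j
        exact K.norm_starProjection_orthogonal_le_norm_sub _ (hWK j)
    _ = ∑ i, ∑ j, (W - S) i j ^ 2 := by
        rw [sum_sq_eq_sum_norm_col_sq]
        exact Finset.sum_congr rfl fun j _ => by rw [norm_sub_rev]; rfl

end Matrix

theorem frobNorm_mul_mul_transpose {m n : ℕ} {U : Matrix (Fin m) (Fin m) ℝ}
    {V : Matrix (Fin n) (Fin n) ℝ} (hU : Uᵀ * U = 1) (hV : Vᵀ * V = 1)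
    (M : Matrix (Fin m) (Fin n) ℝ) : frobNorm (U * M * Vᵀ) = frobNorm M := by
  unfold frobNorm
  rw [sum_sq_eq_trace_transpose_mul, sum_sq_eq_trace_transpose_mul]
  have h : (U * M * Vᵀ)ᵀ * (U * M * Vᵀ) = V * (Mᵀ * M * Vᵀ) := by
    simp only [transpose_mul, transpose_transpose, Matrix.mul_assoc]
    rw [← Matrix.mul_assoc Uᵀ U, hU, Matrix.one_mul]
  rw [h, trace_mul_comm, Matrix.mul_assoc, hV, Matrix.mul_one]

section RectangularDiagonal

variable {m n : ℕ} {σ : ℕ → ℝ} {S : Matrix (Fin m) (Fin n) ℝ}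

theorem support_col_subsingleton_of_diag
    (hS : ∀ i j, S i j = if (i : ℕ) = (j : ℕ) then σ (i : ℕ) else 0) (j : Fin n) :
    (S.col j).support.Subsingleton := by
  intro i hi i' hi'
  simp only [Function.mem_support, col_apply, hS, ne_eq, ite_eq_right_iff, not_forall] at hi hi'
  exact Fin.ext (hi.1.trans hi'.1.symm)

theorem sum_sq_row_of_diag
    (hS : ∀ i j, S i j = if (i : ℕ) = (j : ℕ) then σ (i : ℕ) else 0) (i : Fin m) :
    ∑ j, S i j ^ 2 = if (i : ℕ) < n then σ i ^ 2 else 0 := by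
  simp only [hS, ite_pow, ne_eq, OfNat.ofNat_ne_zero, not_false_eq_true, zero_pow]
  rw [Fin.sum_univ_eq_sum_range (fun k => if (i : ℕ) = k then σ i ^ 2 else 0),
    Finset.sum_ite_eq]
  simp only [Finset.mem_range]

theorem sum_sq_row_antitone_of_diag
    (hS : ∀ i j, S i j = if (i : ℕ) = (j : ℕ) then σ (i : ℕ) else 0)
    (hσnn : ∀ i, i < min m n → 0 ≤ σ i)
    (hσord : ∀ i j, i ≤ j → j < min m n → σ j ≤ σ i)
    {i i' : Fin m} (hii' : (i : ℕ) ≤ i') : ∑ j, S i' j ^ 2 ≤ ∑ j, S i j ^ 2 := by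
  rw [sum_sq_row_of_diag hS, sum_sq_row_of_diag hS]
  by_cases hi' : (i' : ℕ) < n
  · have hq : (i' : ℕ) < min m n := lt_min i'.isLt hi'
    rw [if_pos hi', if_pos (hii'.trans_lt hi')]
    exact pow_le_pow_left₀ (hσnn _ hq) (hσord _ _ hii' hq) 2
  · rw [if_neg hi']
    split_ifs <;> positivity

end RectangularDiagonal

theorem svd_truncation_is_lowrank_projection_general
    {m n : ℕ} (κ : ℕ)
    (U : Matrix (Fin m) (Fin m) ℝ) (V : Matrix (Fin n) (Fin n) ℝ)
    (hU : U * Uᵀ = 1 ∧ Uᵀ * U = 1) (hV : V * Vᵀ = 1 ∧ Vᵀ * V = 1)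
    (σ : ℕ → ℝ)
    (hσnn : ∀ i, i < min m n → 0 ≤ σ i)
    (hσord : ∀ i j, i ≤ j → j < min m n → σ j ≤ σ i)
    (S : Matrix (Fin m) (Fin n) ℝ)
    (hS : ∀ i j, S i j = if (i : ℕ) = (j : ℕ) then σ (i : ℕ) else 0)
    (Shat : Matrix (Fin m) (Fin n) ℝ)
    (hShat : ∀ i j, Shat i j = if (i : ℕ) = (j : ℕ) ∧ (i : ℕ) < κ then σ (i : ℕ) else 0)
    (A : Matrix (Fin m) (Fin n) ℝ) (hA : A = U * S * Vᵀ) :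
    (U * Shat * Vᵀ).rank ≤ κ ∧
      ∀ Z : Matrix (Fin m) (Fin n) ℝ, Z.rank ≤ κ →
        frobNorm (U * Shat * Vᵀ - A) ≤ frobNorm (Z - A) := by
  obtain ⟨hUUt, hUtU⟩ := hU
  obtain ⟨hVVt, hVtV⟩ := hV
  set t : Finset (Fin m) := {i | (i : ℕ) < κ}
  have hShat_row : ∀ i j, Shat i j = if i ∈ t then S i j else 0 := by
    intro i j
    by_cases hi : (i : ℕ) < κ <;> simp [t, hShat, hS, hi]
  have hcard : #t = min m κ := Fin.card_filter_val_lt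
  refine ⟨?_, fun Z hZ => ?_⟩
  · calc (U * Shat * Vᵀ).rank ≤ Shat.rank := (rank_mul_le_left _ _).trans (rank_mul_le_right _ _)
      _ ≤ #t := rank_le_card_of_forall_notMem_eq_zero t fun i hi j => by simp [hShat_row, hi]
      _ ≤ κ := hcard ▸ min_le_right _ _
  · set W := Uᵀ * Z * V
    have hZW : Z = U * W * Vᵀ := by
      simp only [W, ← Matrix.mul_assoc, hUUt, Matrix.one_mul]
      rw [Matrix.mul_assoc, hVVt, Matrix.mul_one]
    have hW : W.rank ≤ #t := hcard ▸ le_min (rank_le_height W)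
      (((rank_mul_le_left _ _).trans (rank_mul_le_right _ _)).trans hZ)
    have htrunc : ∑ i, ∑ j, (Shat - S) i j ^ 2 = ∑ i ∈ tᶜ, ∑ j, S i j ^ 2 := by
      rw [← t.sum_add_sum_compl, Finset.sum_eq_zero fun i hi => by simp [hShat_row, hi],
        zero_add]
      refine Finset.sum_congr rfl fun i hi => Finset.sum_congr rfl fun j _ => ?_
      simp [hShat_row, Finset.mem_compl.mp hi]
    rw [hA, hZW, ← Matrix.sub_mul, ← Matrix.mul_sub, ← Matrix.sub_mul, ← Matrix.mul_sub,
      frobNorm_mul_mul_transpose hUtU hVtV, frobNorm_mul_mul_transpose hUtU hVtV]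
    refine Real.sqrt_le_sqrt (htrunc ▸ sum_compl_sum_sq_le_sum_sq_sub_of_rank_le
      (support_col_subsingleton_of_diag hS) t ?_ hW)
    intro i hi i' hi'
    simp only [t, Finset.mem_filter, Finset.mem_univ, true_and, not_lt] at hi hi'
    exact sum_sq_row_antitone_of_diag hS hσnn hσord (hi.le.trans hi')

/-- truncating the SVD of `A = U Σ Vᵀ` to its `κ` largest singular values
yields a Frobenius-norm projection of `A` onto the set of matrices of rank at most `κ`
(Eckart–Young). -/
theorem svd_truncation_is_lowrank_projection
    {m n : ℕ} (κ : ℕ) (hκ : κ ≤ min m n - 1)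
    (U : Matrix (Fin m) (Fin m) ℝ) (V : Matrix (Fin n) (Fin n) ℝ)
    (hU : U * Uᵀ = 1 ∧ Uᵀ * U = 1) (hV : V * Vᵀ = 1 ∧ Vᵀ * V = 1)
    (σ : ℕ → ℝ)
    (hσnn : ∀ i, i < min m n → 0 ≤ σ i)
    (hσord : ∀ i j, i ≤ j → j < min m n → σ j ≤ σ i)
    (S : Matrix (Fin m) (Fin n) ℝ)
    (hS : ∀ i j, S i j = if (i : ℕ) = (j : ℕ) then σ (i : ℕ) else 0)
    (Shat : Matrix (Fin m) (Fin n) ℝ)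
    (hShat : ∀ i j, Shat i j = if (i : ℕ) = (j : ℕ) ∧ (i : ℕ) < κ then σ (i : ℕ) else 0)
    (A : Matrix (Fin m) (Fin n) ℝ) (hA : A = U * S * Vᵀ) :
    (U * Shat * Vᵀ).rank ≤ κ ∧
      ∀ Z : Matrix (Fin m) (Fin n) ℝ, Z.rank ≤ κ →
        frobNorm (U * Shat * Vᵀ - A) ≤ frobNorm (Z - A) :=
  svd_truncation_is_lowrank_projection_general κ U V hU hV σ hσnn hσord S hS Shat hShat A hA
end
end

section
/- Let x̄ ∈ ℝⁿ, let s < n, and let S ⊆ {1,…,n} be an index set with |S| = s containing indices of s largest components of x̄ in absolute value, i.e., |x̄_i| ≥ |x̄_j| for all i ∈ S and j ∉ S. Define x̂ ∈ ℝⁿ by x̂_i = x̄_i for i ∈ S and x̂_i = 0 otherwise. Then x̂ is a Euclidean projection of x̄ onto the sparsity set D = {x ∈ ℝⁿ : ‖x‖₀ ≤ s}; i.e., ‖x̂‖₀ ≤ s and ‖x̂ − x̄‖ ≤ ‖z − x̄‖ for every z ∈ ℝⁿ with ‖z‖₀ ≤ s. -/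
/-! Write `T` for the support of a competitor `z` with at most `s` nonzero entries. Then
`‖z - x̄‖² ≥ ∑_{i ∉ T} x̄ᵢ²`, while `‖x̂ - x̄‖² = ∑_{i ∉ S} x̄ᵢ²`. Since `|T| ≤ |S|` and every
entry of `x̄` indexed by `S` dominates every other one in absolute value, the squares of `x̄`
carry at least as much mass on `S` as on `T`, hence at most as much off `S` as off `T`. -/

namespace Finset

variable {ι M : Type*} [AddCommMonoid M] [LinearOrder M] [IsOrderedCancelAddMonoid M]

theorem sum_le_sum_of_card_le_of_forall_compl_le [DecidableEq ι] {f : ι → M} {S T : Finset ι}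
    (hf : ∀ i ∈ S, 0 ≤ f i) (hlargest : ∀ i ∈ S, ∀ j ∉ S, f j ≤ f i) (hcard : #T ≤ #S) :
    ∑ i ∈ T, f i ≤ ∑ i ∈ S, f i := by
  rw [← sum_sdiff_le_sum_sdiff]
  have hcard' : #(T \ S) ≤ #(S \ T) := card_sdiff_le_card_sdiff_iff.2 hcard
  rcases (S \ T).eq_empty_or_nonempty with hempty | hne
  · rw [hempty, card_empty, Nat.le_zero, card_eq_zero] at hcard'
    rw [hcard', hempty]
  obtain ⟨j, hj, hmin⟩ := exists_min_image (S \ T) f hne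
  have hjS : j ∈ S := (mem_sdiff.1 hj).1
  calc ∑ i ∈ T \ S, f i ≤ #(T \ S) • f j :=
        sum_le_card_nsmul _ _ _ fun i hi => hlargest j hjS i (mem_sdiff.1 hi).2
    _ ≤ #(S \ T) • f j := nsmul_le_nsmul_left (hf j hjS) hcard'
    _ ≤ ∑ i ∈ S \ T, f i := card_nsmul_le_sum _ _ _ hmin

end Finset

namespace EuclideanSpace

open Finset

variable {ι : Type*} [Fintype ι]

theorem norm_sub_sq_eq_sum_compl [DecidableEq ι] {x xhat : EuclideanSpace ℝ ι} {S : Finset ι}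
    (hxhat : ∀ i, xhat i = if i ∈ S then x i else 0) :
    ‖xhat - x‖ ^ 2 = ∑ i ∈ Sᶜ, x i ^ 2 := by
  rw [real_norm_sq_eq, ← sum_compl_add_sum S]
  have hin : ∑ i ∈ S, (xhat - x) i ^ 2 = 0 := sum_eq_zero fun i hi => by simp [hxhat, hi]
  rw [hin, add_zero]
  exact sum_congr rfl fun i hi => by simp [hxhat, mem_compl.1 hi]

theorem sum_sq_compl_support_le_norm_sub_sq [DecidableEq ι] (x z : EuclideanSpace ℝ ι) :
    ∑ i ∈ (univ.filter fun i => z i ≠ 0)ᶜ, x i ^ 2 ≤ ‖z - x‖ ^ 2 := by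
  rw [real_norm_sq_eq]
  calc ∑ i ∈ (univ.filter fun i => z i ≠ 0)ᶜ, x i ^ 2
      = ∑ i ∈ (univ.filter fun i => z i ≠ 0)ᶜ, (z - x) i ^ 2 :=
        sum_congr rfl fun i hi => by simp_all
    _ ≤ ∑ i, (z - x) i ^ 2 :=
        sum_le_sum_of_subset_of_nonneg (subset_univ _) fun i _ _ => sq_nonneg _

end EuclideanSpace

open Finset in
theorem hard_thresholding_is_sparse_projection_general
    {n : ℕ} (s : ℕ)
    (xbar : EuclideanSpace ℝ (Fin n))
    (S : Finset (Fin n)) (hcard : S.card = s)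
    (hlargest : ∀ i ∈ S, ∀ j ∉ S, |xbar j| ≤ |xbar i|)
    (xhat : EuclideanSpace ℝ (Fin n))
    (hxhat : ∀ i, xhat i = if i ∈ S then xbar i else 0) :
    (Finset.univ.filter fun i => xhat i ≠ 0).card ≤ s ∧
      ∀ z : EuclideanSpace ℝ (Fin n),
        (Finset.univ.filter fun i => z i ≠ 0).card ≤ s → ‖xhat - xbar‖ ≤ ‖z - xbar‖ := by
  refine ⟨(card_le_card fun i hi => ?_).trans hcard.le, fun z hz => ?_⟩
  · by_contra hiS
    simp [hxhat, hiS] at hi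
  set T := univ.filter fun i => z i ≠ 0
  have hmass : ∑ i ∈ T, xbar i ^ 2 ≤ ∑ i ∈ S, xbar i ^ 2 :=
    sum_le_sum_of_card_le_of_forall_compl_le (fun i _ => sq_nonneg _)
      (fun i hi j hj => sq_le_sq.2 (hlargest i hi j hj)) (hz.trans hcard.ge)
  have hmass_compl : ∑ i ∈ Sᶜ, xbar i ^ 2 ≤ ∑ i ∈ Tᶜ, xbar i ^ 2 := by
    linarith [sum_compl_add_sum S (xbar · ^ 2), sum_compl_add_sum T (xbar · ^ 2)]
  refine (pow_le_pow_iff_left₀ (norm_nonneg _) (norm_nonneg _) two_ne_zero).1 ?_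
  calc ‖xhat - xbar‖ ^ 2 = ∑ i ∈ Sᶜ, xbar i ^ 2 := EuclideanSpace.norm_sub_sq_eq_sum_compl hxhat
    _ ≤ ∑ i ∈ Tᶜ, xbar i ^ 2 := hmass_compl
    _ ≤ ‖z - xbar‖ ^ 2 := EuclideanSpace.sum_sq_compl_support_le_norm_sub_sq xbar z

/-- keeping the `s` largest components (in absolute value) of `x̄` and
setting the remaining ones to zero yields a Euclidean projection of `x̄` onto the
sparsity set `D = {x : ‖x‖₀ ≤ s}`. -/
theorem hard_thresholding_is_sparse_projection
    {n : ℕ} (s : ℕ) (hs : s < n)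
    (xbar : EuclideanSpace ℝ (Fin n))
    (S : Finset (Fin n)) (hcard : S.card = s)
    (hlargest : ∀ i ∈ S, ∀ j ∉ S, |xbar j| ≤ |xbar i|)
    (xhat : EuclideanSpace ℝ (Fin n))
    (hxhat : ∀ i, xhat i = if i ∈ S then xbar i else 0) :
    (Finset.univ.filter fun i => xhat i ≠ 0).card ≤ s ∧
      ∀ z : EuclideanSpace ℝ (Fin n),
        (Finset.univ.filter fun i => z i ≠ 0).card ≤ s → ‖xhat - xbar‖ ≤ ‖z - xbar‖ :=
  hard_thresholding_is_sparse_projection_general s xbar S hcard hlargest xhat hxhat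
end

section
/- Let D = {(x,y) ∈ ℝⁿ × ℝⁿ : x_i y_i = 0 for all i, l_x ≤ x ≤ u_x, l_y ≤ y ≤ u_y} be a box-switching constraint set, where the componentwise bounds (allowed to be ±∞) satisfy l_x ≤ 0 ≤ u_x and l_y ≤ 0 ≤ u_y. Given (x̄, ȳ) ∈ ℝⁿ × ℝⁿ, let x̃ and ỹ be the componentwise projections of x̄ and ȳ onto the boxes [l_x, u_x] and [l_y, u_y] respectively (i.e., x̃_i = min{max{x̄_i, (l_x)_i}, (u_x)_i}, and analogously for ỹ), and define (x̂_i, ŷ_i) = (x̃_i, 0) if x̄_i² + (ỹ_i − ȳ_i)² ≥ (x̃_i − x̄_i)² + ȳ_i², and (x̂_i, ŷ_i) = (0, ỹ_i) otherwise. Then (x̂, ŷ) is a Euclidean projection of (x̄, ȳ) onto D; i.e., (x̂, ŷ) ∈ D and ‖(x̂, ŷ) − (x̄, ȳ)‖ ≤ ‖(x, y) − (x̄, ȳ)‖ for every (x,y) ∈ D. -/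
/-!
Both the constraints and the squared distance split over coordinates, so it suffices to
project onto the two-dimensional set `{(x, y) : x y = 0, x ∈ [l_x, u_x], y ∈ [l_y, u_y]}`.
That set is the union of the segments `[l_x, u_x] × {0}` and `{0} × [l_y, u_y]`, whose
nearest points are `(x̃, 0)` and `(0, ỹ)` by the one-dimensional clamp; the better of the
two is the projection onto the union.
-/

namespace EReal

variable {l u : EReal} {c : ℝ}

lemma min_max_coe_ne_top (hl : l ≤ c) (b : ℝ) : min (max (b : EReal) l) u ≠ ⊤ :=
  ((min_le_left _ _).trans_lt (max_lt (coe_lt_top b) (hl.trans_lt (coe_lt_top c)))).ne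

lemma min_max_coe_ne_bot (hu : c ≤ u) (b : ℝ) : min (max (b : EReal) l) u ≠ ⊥ :=
  (lt_min (lt_max_of_lt_left (bot_lt_coe b)) ((bot_lt_coe c).trans_le hu)).ne'

lemma coe_toReal_min_max (hl : l ≤ c) (hu : c ≤ u) (b : ℝ) :
    ((min (max (b : EReal) l) u).toReal : EReal) = min (max (b : EReal) l) u :=
  coe_toReal (min_max_coe_ne_top hl b) (min_max_coe_ne_bot hu b)

lemma le_coe_toReal_min_max (hl : l ≤ c) (hu : c ≤ u) (b : ℝ) :
    l ≤ ((min (max (b : EReal) l) u).toReal : EReal) := by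
  rw [coe_toReal_min_max hl hu]
  exact le_min (le_max_right _ _) (hl.trans hu)

lemma coe_toReal_min_max_le (hl : l ≤ c) (hu : c ≤ u) (b : ℝ) :
    ((min (max (b : EReal) l) u).toReal : EReal) ≤ u := by
  rw [coe_toReal_min_max hl hu]
  exact min_le_right _ _

lemma toReal_min_max_mem_uIcc (hl : l ≤ c) (hu : c ≤ u) {x : ℝ} (hlx : l ≤ x) (hxu : x ≤ u)
    (b : ℝ) : (min (max (b : EReal) l) u).toReal ∈ Set.uIcc b x := by
  have hmono := coe_strictMono.monotone
  constructor
  · rw [← EReal.coe_le_coe_iff, coe_toReal_min_max hl hu, hmono.map_min]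
    exact le_min ((min_le_left _ _).trans (le_max_left _ _)) ((min_le_right _ _).trans hxu)
  · rw [← EReal.coe_le_coe_iff, coe_toReal_min_max hl hu, hmono.map_max]
    exact (min_le_left _ _).trans (max_le_max le_rfl hlx)

lemma sq_toReal_min_max_sub_le (hl : l ≤ c) (hu : c ≤ u) {x : ℝ} (hlx : l ≤ x) (hxu : x ≤ u)
    (b : ℝ) : ((min (max (b : EReal) l) u).toReal - b) ^ 2 ≤ (x - b) ^ 2 :=
  sq_le_sq.mpr (Set.abs_sub_left_of_mem_uIcc (toReal_min_max_mem_uIcc hl hu hlx hxu b))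

end EReal

section Switching

variable {a b s t p q : ℝ}

lemma switching_choice_eq_or
    (h : ((s - a) ^ 2 + b ^ 2 ≤ a ^ 2 + (t - b) ^ 2 → p = s ∧ q = 0) ∧
      (¬ ((s - a) ^ 2 + b ^ 2 ≤ a ^ 2 + (t - b) ^ 2) → p = 0 ∧ q = t)) :
    (p = s ∧ q = 0) ∨ (p = 0 ∧ q = t) := by
  by_cases hc : (s - a) ^ 2 + b ^ 2 ≤ a ^ 2 + (t - b) ^ 2
  exacts [Or.inl (h.1 hc), Or.inr (h.2 hc)]

lemma switching_choice_sq_dist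
    (h : ((s - a) ^ 2 + b ^ 2 ≤ a ^ 2 + (t - b) ^ 2 → p = s ∧ q = 0) ∧
      (¬ ((s - a) ^ 2 + b ^ 2 ≤ a ^ 2 + (t - b) ^ 2) → p = 0 ∧ q = t)) :
    (p - a) ^ 2 + (q - b) ^ 2 = min ((s - a) ^ 2 + b ^ 2) (a ^ 2 + (t - b) ^ 2) := by
  by_cases hc : (s - a) ^ 2 + b ^ 2 ≤ a ^ 2 + (t - b) ^ 2
  · obtain ⟨rfl, rfl⟩ := h.1 hc
    rw [min_eq_left hc]
    ring
  · obtain ⟨rfl, rfl⟩ := h.2 hc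
    rw [min_eq_right (le_of_not_ge hc)]
    ring

lemma min_switching_le_sq_dist {x y : ℝ} (hs : (s - a) ^ 2 ≤ (x - a) ^ 2)
    (ht : (t - b) ^ 2 ≤ (y - b) ^ 2) (hxy : x * y = 0) :
    min ((s - a) ^ 2 + b ^ 2) (a ^ 2 + (t - b) ^ 2) ≤ (x - a) ^ 2 + (y - b) ^ 2 := by
  rcases mul_eq_zero.mp hxy with rfl | rfl
  · exact (min_le_right _ _).trans (by linarith)
  · exact (min_le_left _ _).trans (by linarith)

end Switching

/-- closed-form Euclidean projection onto the box-switching constraint set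
`D = {(x,y) : x_i y_i = 0 ∀ i, l_x ≤ x ≤ u_x, l_y ≤ y ≤ u_y}` (bounds allowed to be
`±∞`, with `l_x ≤ 0 ≤ u_x` and `l_y ≤ 0 ≤ u_y`). -/
theorem box_switching_projection
    {n : ℕ} (lx ux ly uy : Fin n → EReal)
    (hbox : ∀ i, lx i ≤ 0 ∧ (0 : EReal) ≤ ux i ∧ ly i ≤ 0 ∧ (0 : EReal) ≤ uy i)
    (xbar ybar : Fin n → ℝ)
    (xt yt : Fin n → ℝ)
    (hxt : ∀ i, xt i = (min (max (xbar i : EReal) (lx i)) (ux i)).toReal)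
    (hyt : ∀ i, yt i = (min (max (ybar i : EReal) (ly i)) (uy i)).toReal)
    (xhat yhat : Fin n → ℝ)
    (hhat : ∀ i,
      ((xt i - xbar i) ^ 2 + ybar i ^ 2 ≤ xbar i ^ 2 + (yt i - ybar i) ^ 2 →
        xhat i = xt i ∧ yhat i = 0) ∧
      (¬ ((xt i - xbar i) ^ 2 + ybar i ^ 2 ≤ xbar i ^ 2 + (yt i - ybar i) ^ 2) →
        xhat i = 0 ∧ yhat i = yt i)) :
    (∀ i, xhat i * yhat i = 0 ∧
        lx i ≤ (xhat i : EReal) ∧ (xhat i : EReal) ≤ ux i ∧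
        ly i ≤ (yhat i : EReal) ∧ (yhat i : EReal) ≤ uy i) ∧
      ∀ x y : Fin n → ℝ,
        (∀ i, x i * y i = 0 ∧
          lx i ≤ (x i : EReal) ∧ (x i : EReal) ≤ ux i ∧
          ly i ≤ (y i : EReal) ∧ (y i : EReal) ≤ uy i) →
        Real.sqrt (∑ i, (xhat i - xbar i) ^ 2 + ∑ i, (yhat i - ybar i) ^ 2) ≤
          Real.sqrt (∑ i, (x i - xbar i) ^ 2 + ∑ i, (y i - ybar i) ^ 2) := by
  refine ⟨fun i => ?_, fun x y hD => Real.sqrt_le_sqrt ?_⟩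
  · obtain ⟨hlx, hux, hly, huy⟩ := hbox i
    rcases switching_choice_eq_or (hhat i) with ⟨hp, hq⟩ | ⟨hp, hq⟩ <;> rw [hp, hq]
    · rw [hxt i]
      exact ⟨mul_zero _, EReal.le_coe_toReal_min_max hlx hux _,
        EReal.coe_toReal_min_max_le hlx hux _, hly, huy⟩
    · rw [hyt i]
      exact ⟨zero_mul _, hlx, hux, EReal.le_coe_toReal_min_max hly huy _,
        EReal.coe_toReal_min_max_le hly huy _⟩
  · rw [← Finset.sum_add_distrib, ← Finset.sum_add_distrib]
    refine Finset.sum_le_sum fun i _ => ?_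
    obtain ⟨hlx, hux, hly, huy⟩ := hbox i
    obtain ⟨hxy, hlxi, hxui, hlyi, hyui⟩ := hD i
    rw [switching_choice_sq_dist (hhat i)]
    refine min_switching_le_sq_dist ?_ ?_ hxy
    · rw [hxt i]; exact EReal.sq_toReal_min_max_sub_le hlx hux hlxi hxui _
    · rw [hyt i]; exact EReal.sq_toReal_min_max_sub_le hly huy hlyi hyui _
end
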